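/- Let ρ be a density matrix on two qubits with single-qubit marginals ρ₁ = tr₂(ρ) and ρ₂ = tr₁(ρ). Then the measured mutual information of ρ is zero — i.e., for every pair of single-qubit PVMs {Π^{(1)}_a}, {Π^{(2)}_b} the outcome distribution P(a,b) = tr((Π^{(1)}_a ⊗ Π^{(2)}_b) ρ) satisfies H(P₁)+H(P₂)−H(P) = 0 — if and only if ρ = ρ₁ ⊗ ρ₂. Consequently, if I_m(ρ) > 0 then the two qubits are correlated by a common source; this is the key step showing that the qubit characteristic matrix of a noisy network with product source states ρ = ⊗_i ρ^{Λ_i} completely characterizes the network topology. -/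

import Mathlib

open scoped Kronecker Matrix Classical ComplexOrder

noncomputable section

/-- Base-2 Shannon entropy of a finitely supported distribution. -/
def shannon {α : Type*} [Fintype α] (p : α → ℝ) : ℝ :=
  -∑ x, p x * Real.logb 2 (p x)

/-- Base-2 von Neumann entropy of a matrix (junk value `0` if not Hermitian),
computed from the eigenvalues. -/
def vnEntropy {d : Type*} [Fintype d] [DecidableEq d] (ρ : Matrix d d ℂ) : ℝ :=
  if h : ρ.IsHermitian then -∑ k, h.eigenvalues k * Real.logb 2 (h.eigenvalues k) else 0

/-- A projection-valued measure on a finite-dimensional space: a finite family of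
mutually orthogonal self-adjoint projections summing to the identity. -/
structure PVM (ι : Type*) (d : Type*) [Fintype d] [DecidableEq d] where
  [fintype : Fintype ι]
  proj : ι → Matrix d d ℂ
  herm : ∀ a, (proj a).IsHermitian
  idem : ∀ a, proj a * proj a = proj a
  orthogonal : ∀ a b, a ≠ b → proj a * proj b = 0
  complete : ∑ a, proj a = 1

/-- Outcome distribution of a PVM measurement on a state. -/
def pvmProb {ι d : Type*} [Fintype d] [DecidableEq d] (P : PVM ι d)
    (ρ : Matrix d d ℂ) : ι → ℝ :=
  fun a => ((P.proj a * ρ).trace).re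

/-- Shannon entropy of the outcome distribution of a PVM measurement. -/
def pvmEntropy {ι d : Type*} [Fintype d] [DecidableEq d] (P : PVM ι d)
    (ρ : Matrix d d ℂ) : ℝ :=
  letI := P.fintype
  shannon (pvmProb P ρ)

/-- Joint outcome distribution of a product of two local PVMs on a bipartite state. -/
def jointProb {ιA ιB dA dB : Type*} [Fintype dA] [DecidableEq dA] [Fintype dB]
    [DecidableEq dB] (P : PVM ιA dA) (Q : PVM ιB dB)
    (ρ : Matrix (dA × dB) (dA × dB) ℂ) : ιA × ιB → ℝ :=
  fun ab => (((P.proj ab.1 ⊗ₖ Q.proj ab.2) * ρ).trace).re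

/-- Shannon entropy of the joint outcome distribution of a product of two local PVMs. -/
def jointEntropy {ιA ιB dA dB : Type*} [Fintype dA] [DecidableEq dA] [Fintype dB]
    [DecidableEq dB] (P : PVM ιA dA) (Q : PVM ιB dB)
    (ρ : Matrix (dA × dB) (dA × dB) ℂ) : ℝ :=
  letI := P.fintype; letI := Q.fintype
  shannon (jointProb P Q ρ)

/-- Mutual information `H(P_A) + H(P_B) - H(P_{AB})` of the joint outcome distribution
of a product of two local PVMs on a bipartite state. -/
def miOf {ιA ιB dA dB : Type*} [Fintype dA] [DecidableEq dA] [Fintype dB]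
    [DecidableEq dB] (P : PVM ιA dA) (Q : PVM ιB dB)
    (ρ : Matrix (dA × dB) (dA × dB) ℂ) : ℝ :=
  letI := P.fintype; letI := Q.fintype
  shannon (fun a : ιA => ∑ b : ιB, jointProb P Q ρ (a, b)) +
    shannon (fun b : ιB => ∑ a : ιA, jointProb P Q ρ (a, b)) -
    shannon (jointProb P Q ρ)

/-- Measured mutual information: the supremum of `miOf` over all pairs of local PVMs. -/
def measuredMI {dA dB : Type*} [Fintype dA] [DecidableEq dA] [Fintype dB] [DecidableEq dB]
    (ρ : Matrix (dA × dB) (dA × dB) ℂ) : ℝ :=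
  sSup { r : ℝ | ∃ (ιA ιB : Type) (P : PVM ιA dA) (Q : PVM ιB dB), r = miOf P Q ρ }

/-- The computational-basis PVM. -/
def compPVM (d : Type*) [Fintype d] [DecidableEq d] : PVM d d where
  proj x := Matrix.diagonal (fun y => if y = x then (1 : ℂ) else 0)
  herm x := by
    refine Matrix.isHermitian_diagonal_of_self_adjoint _ ?_
    funext y
    by_cases h : y = x <;> simp [h]
  idem x := by
    rw [Matrix.diagonal_mul_diagonal]
    ext y z
    by_cases h : y = z
    · subst h
      by_cases h2 : y = x <;> simp [Matrix.diagonal_apply, h2]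
    · simp [Matrix.diagonal_apply, h]
  orthogonal a b hab := by
    rw [Matrix.diagonal_mul_diagonal]
    have h0 : (fun y => (if y = a then (1:ℂ) else 0) * (if y = b then (1:ℂ) else 0))
        = fun _ => (0:ℂ) := by
      funext y
      by_cases h : y = a <;> by_cases h' : y = b <;> simp_all
    rw [h0, Matrix.diagonal_zero]
  complete := by
    ext y z
    rw [Matrix.sum_apply]
    by_cases h : y = z
    · subst h
      simp [Matrix.diagonal_apply, Matrix.one_apply]
    · simp [Matrix.diagonal_apply, Matrix.one_apply, h]

/-- Partial trace over the second tensor factor. -/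
def ptraceR {dA dB : Type*} [Fintype dB] (ρ : Matrix (dA × dB) (dA × dB) ℂ) :
    Matrix dA dA ℂ :=
  Matrix.of fun a a' => ∑ b, ρ (a, b) (a', b)

/-- Partial trace over the first tensor factor. -/
def ptraceL {dA dB : Type*} [Fintype dA] (ρ : Matrix (dA × dB) (dA × dB) ℂ) :
    Matrix dB dB ℂ :=
  Matrix.of fun b b' => ∑ a, ρ (a, b) (a, b')

/-! If every local measurement gives zero mutual information, then for every pair of
projections `p, q` the two-outcome measurements `{p, 1 - p}`, `{q, 1 - q}` yield a product
distribution (equality case of Gibbs' inequality), i.e.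
`tr ((p ⊗ q) ρ) = tr ((p ⊗ 1) ρ) · tr ((1 ⊗ q) ρ)`. Both sides are bilinear in `(p, q)` and
projections span all complex matrices, so the identity holds for all `X ⊗ Y`; testing it on
matrix units gives `ρ = ρ₁ ⊗ ρ₂`. Conversely, a product state yields product outcome
distributions, whose mutual information vanishes. -/

def mutualInfo {α β : Type*} [Fintype α] [Fintype β] (p : α × β → ℝ) : ℝ :=
  shannon (fun a => ∑ b, p (a, b)) + shannon (fun b => ∑ a, p (a, b)) - shannon p

lemma shannon_eq_neg_sum_mul_log_div {α : Type*} [Fintype α] (p : α → ℝ) :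
    shannon p = -(∑ x, p x * Real.log (p x)) / Real.log 2 := by
  simp only [shannon, Real.logb, mul_div_assoc', Finset.sum_div, neg_div]

lemma shannon_mul {α β : Type*} [Fintype α] [Fintype β] {f : α → ℝ} {g : β → ℝ}
    (hf : ∑ a, f a = 1) (hg : ∑ b, g b = 1) :
    shannon (fun x : α × β => f x.1 * g x.2) = shannon f + shannon g := by
  have hsplit : ∀ x : α × β, f x.1 * g x.2 * Real.logb 2 (f x.1 * g x.2)
      = g x.2 * (f x.1 * Real.logb 2 (f x.1)) + f x.1 * (g x.2 * Real.logb 2 (g x.2)) := by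
    rintro ⟨a, b⟩
    rcases eq_or_ne (f a) 0 with ha | ha
    · simp [ha]
    rcases eq_or_ne (g b) 0 with hb | hb
    · simp [hb]
    rw [Real.logb_mul ha hb]
    ring
  simp only [shannon, hsplit, Finset.sum_add_distrib, Fintype.sum_prod_type, ← Finset.mul_sum,
    ← Finset.sum_mul, hf, hg, one_mul]
  ring

lemma mutualInfo_mul {α β : Type*} [Fintype α] [Fintype β] {f : α → ℝ} {g : β → ℝ}
    (hf : ∑ a, f a = 1) (hg : ∑ b, g b = 1) :
    mutualInfo (fun x : α × β => f x.1 * g x.2) = 0 := by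
  simp only [mutualInfo, ← Finset.mul_sum, ← Finset.sum_mul, hf, hg, mul_one, one_mul,
    shannon_mul hf hg, sub_self]

/-- The strict form of `log x ≤ x - 1`, written so that `p = 0` is allowed. -/
lemma Real.mul_log_sub_mul_log_lt {p q : ℝ} (hp : 0 ≤ p) (hq : 0 ≤ q) (habs : q = 0 → p = 0)
    (hne : p ≠ q) : p * Real.log q - p * Real.log p < q - p := by
  rcases hp.eq_or_lt with rfl | hp
  · simpa using lt_of_le_of_ne hq hne
  have hq : 0 < q := lt_of_le_of_ne hq fun h => hp.ne' (habs h.symm)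
  have hlt := Real.log_lt_sub_one_of_pos (div_pos hq hp) (by
    rwa [Ne, div_eq_one_iff_eq hp.ne', eq_comm])
  rw [Real.log_div hq.ne' hp.ne'] at hlt
  have := mul_lt_mul_of_pos_left hlt hp
  rwa [mul_sub, mul_sub, mul_div_cancel₀ _ hp.ne', mul_one] at this

/-- The equality case of Gibbs' inequality. -/
lemma eq_of_sum_mul_log_eq {ι : Type*} [Fintype ι] {p q : ι → ℝ} (hp : ∀ x, 0 ≤ p x)
    (hq : ∀ x, 0 ≤ q x) (hsum : ∑ x, p x = ∑ x, q x) (habs : ∀ x, q x = 0 → p x = 0)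
    (heq : ∑ x, p x * Real.log (q x) = ∑ x, p x * Real.log (p x)) : p = q := by
  by_contra hne
  obtain ⟨x₀, hx₀⟩ := Function.ne_iff.mp hne
  have hle : ∀ x ∈ Finset.univ, p x * Real.log (q x) - p x * Real.log (p x) ≤ q x - p x := by
    intro x _
    rcases eq_or_ne (p x) (q x) with h | h
    · simp [h]
    · exact (Real.mul_log_sub_mul_log_lt (hp x) (hq x) (habs x) h).le
  have := Finset.sum_lt_sum hle
    ⟨x₀, Finset.mem_univ _, Real.mul_log_sub_mul_log_lt (hp x₀) (hq x₀) (habs x₀) hx₀⟩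
  rw [Finset.sum_sub_distrib, Finset.sum_sub_distrib, heq, hsum] at this
  simp at this

lemma mutualInfo_mul_log_two {α β : Type*} [Fintype α] [Fintype β] {p : α × β → ℝ}
    (hp : ∀ x, 0 ≤ p x) :
    mutualInfo p * Real.log 2 = ∑ x, p x * Real.log (p x)
      - ∑ x, p x * Real.log ((∑ b, p (x.1, b)) * ∑ a, p (a, x.2)) := by
  have hsplit : ∀ x, p x * Real.log ((∑ b, p (x.1, b)) * ∑ a, p (a, x.2))
      = p x * Real.log (∑ b, p (x.1, b)) + p x * Real.log (∑ a, p (a, x.2)) := by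
    intro x
    rcases (hp x).eq_or_lt with h0 | hpos
    · simp [← h0]
    have h₁ := Finset.single_le_sum (f := fun b => p (x.1, b)) (fun b _ => hp _)
      (Finset.mem_univ x.2)
    have h₂ := Finset.single_le_sum (f := fun a => p (a, x.2)) (fun a _ => hp _)
      (Finset.mem_univ x.1)
    rw [Real.log_mul (hpos.trans_le h₁).ne' (hpos.trans_le h₂).ne', mul_add]
  have hlog2 : Real.log 2 ≠ 0 := (Real.log_pos one_lt_two).ne'
  rw [Finset.sum_congr rfl fun x _ => hsplit x, Finset.sum_add_distrib]
  simp only [mutualInfo, shannon_eq_neg_sum_mul_log_div, Fintype.sum_prod_type,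
    Fintype.sum_prod_type_right (f := fun x => p x * Real.log (∑ a, p (a, x.2))),
    ← Finset.sum_mul]
  field_simp
  ring

lemma eq_mul_marginals_of_mutualInfo_eq_zero {α β : Type*} [Fintype α] [Fintype β]
    {p : α × β → ℝ} (hp : ∀ x, 0 ≤ p x) (hsum : ∑ x, p x = 1) (h : mutualInfo p = 0) :
    p = fun x => (∑ b, p (x.1, b)) * (∑ a, p (a, x.2)) := by
  have hle₁ : ∀ x, p x ≤ ∑ b, p (x.1, b) := fun x =>
    Finset.single_le_sum (f := fun b => p (x.1, b)) (fun b _ => hp _) (Finset.mem_univ x.2)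
  have hle₂ : ∀ x, p x ≤ ∑ a, p (a, x.2) := fun x =>
    Finset.single_le_sum (f := fun a => p (a, x.2)) (fun a _ => hp _) (Finset.mem_univ x.1)
  refine eq_of_sum_mul_log_eq hp (fun x => mul_nonneg ((hp x).trans (hle₁ x))
    ((hp x).trans (hle₂ x))) ?_ (fun x hx => ?_) ?_
  · have h₁ : ∑ a, ∑ b, p (a, b) = 1 := by rw [← hsum, Fintype.sum_prod_type]
    have h₂ : ∑ b, ∑ a, p (a, b) = 1 := by rw [← hsum, Fintype.sum_prod_type_right]
    rw [hsum]
    simp only [Fintype.sum_prod_type, ← Finset.mul_sum, ← Finset.sum_mul, h₁, h₂, one_mul]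
  · rcases mul_eq_zero.mp hx with h0 | h0
    · exact le_antisymm (h0 ▸ hle₁ x) (hp x)
    · exact le_antisymm (h0 ▸ hle₂ x) (hp x)
  · have := mutualInfo_mul_log_two hp
    rw [h, zero_mul] at this
    linarith

open Matrix

section Kronecker

variable {R : Type*} [CommSemiring R] {l m n p : Type*}

lemma Matrix.kronecker_sum {ι : Type*} (A : Matrix l m R) (B : ι → Matrix n p R)
    (s : Finset ι) : A ⊗ₖ ∑ i ∈ s, B i = ∑ i ∈ s, A ⊗ₖ B i :=
  map_sum (kroneckerBilinear (R := R) A) B s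

lemma Matrix.sum_kronecker {ι : Type*} (A : ι → Matrix l m R) (B : Matrix n p R)
    (s : Finset ι) : (∑ i ∈ s, A i) ⊗ₖ B = ∑ i ∈ s, A i ⊗ₖ B :=
  map_sum ((kroneckerBilinear (R := R)).flip B) A s

variable [StarRing R]

lemma Matrix.IsHermitian.kronecker {A : Matrix m m R} {B : Matrix n n R} (hA : A.IsHermitian)
    (hB : B.IsHermitian) : (A ⊗ₖ B).IsHermitian := by
  rw [IsHermitian, conjTranspose_kronecker, hA.eq, hB.eq]

lemma IsStarProjection.kronecker [Fintype m] [Fintype n] {P : Matrix m m R} {Q : Matrix n n R}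
    (hP : IsStarProjection P) (hQ : IsStarProjection Q) : IsStarProjection (P ⊗ₖ Q) :=
  ⟨by rw [IsIdempotentElem, ← mul_kronecker_mul, hP.isIdempotentElem.eq, hQ.isIdempotentElem.eq],
    (hP.isSelfAdjoint.isHermitian.kronecker hQ.isSelfAdjoint.isHermitian).isSelfAdjoint⟩

end Kronecker

section Trace

variable {d : Type*} [Fintype d]

lemma IsStarProjection.trace_mul_nonneg {P ρ : Matrix d d ℂ} (hP : IsStarProjection P)
    (hρ : ρ.PosSemidef) : 0 ≤ (P * ρ).trace := by
  have := (hρ.mul_mul_conjTranspose_same P).trace_nonneg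
  rwa [trace_mul_cycle, ← star_eq_conjTranspose, hP.isSelfAdjoint.star_eq,
    hP.isIdempotentElem.eq] at this

lemma Matrix.IsHermitian.ofReal_re_trace_mul {A B : Matrix d d ℂ} (hA : A.IsHermitian)
    (hB : B.IsHermitian) : (((A * B).trace.re : ℝ) : ℂ) = (A * B).trace := by
  refine Complex.conj_eq_iff_re.mp ?_
  rw [← Complex.star_def, ← trace_conjTranspose, conjTranspose_mul, hA.eq, hB.eq,
    trace_mul_comm]

end Trace

section PartialTrace

variable {dA dB : Type*} {ρ : Matrix (dA × dB) (dA × dB) ℂ}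

lemma Matrix.IsHermitian.ptraceR [Fintype dB] (hρ : ρ.IsHermitian) : (ptraceR ρ).IsHermitian := by
  ext a a'
  simp only [conjTranspose_apply, _root_.ptraceR, of_apply, star_sum]
  exact Finset.sum_congr rfl fun b _ => congrFun (congrFun hρ (a, b)) (a', b)

lemma Matrix.IsHermitian.ptraceL [Fintype dA] (hρ : ρ.IsHermitian) : (ptraceL ρ).IsHermitian := by
  ext b b'
  simp only [conjTranspose_apply, _root_.ptraceL, of_apply, star_sum]
  exact Finset.sum_congr rfl fun a _ => congrFun (congrFun hρ (a, b)) (a, b')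

variable [Fintype dA] [Fintype dB]

lemma trace_ptraceR : (ptraceR ρ).trace = ρ.trace := by
  simp [ptraceR, trace, Fintype.sum_prod_type]

lemma trace_ptraceL : (ptraceL ρ).trace = ρ.trace := by
  simp [ptraceL, trace, Fintype.sum_prod_type_right]

variable [DecidableEq dA] [DecidableEq dB]

lemma trace_single_kronecker_one_mul (a a' : dA) :
    ((single a' a 1 ⊗ₖ 1) * ρ).trace = ptraceR ρ a a' := by
  simp [← sum_single_one, kronecker_sum, single_kronecker_single, Finset.sum_mul, trace_sum,
    trace_single_mul, ptraceR]

lemma trace_one_kronecker_single_mul (b b' : dB) :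
    ((1 ⊗ₖ single b' b 1) * ρ).trace = ptraceL ρ b b' := by
  simp [← sum_single_one, sum_kronecker, single_kronecker_single, Finset.sum_mul, trace_sum,
    trace_single_mul, ptraceL]

lemma eq_ptraceR_kronecker_ptraceL
    (h : ∀ (X : Matrix dA dA ℂ) (Y : Matrix dB dB ℂ),
      ((X ⊗ₖ Y) * ρ).trace = ((X ⊗ₖ 1) * ρ).trace * ((1 ⊗ₖ Y) * ρ).trace) :
    ρ = ptraceR ρ ⊗ₖ ptraceL ρ := by
  ext ⟨a, b⟩ ⟨a', b'⟩
  have := h (single a' a 1) (single b' b 1)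
  rwa [single_kronecker_single, trace_single_mul, one_mul, one_smul,
    trace_single_kronecker_one_mul, trace_one_kronecker_single_mul] at this

end PartialTrace

section Measurement

variable {d dA dB : Type*} [Fintype d] [DecidableEq d] [Fintype dA] [DecidableEq dA]
  [Fintype dB] [DecidableEq dB]

lemma PVM.isStarProjection_proj {ι : Type*} (P : PVM ι d) (a : ι) :
    IsStarProjection (P.proj a) :=
  ⟨P.idem a, (P.herm a).isSelfAdjoint⟩

def projPVM {p : Matrix d d ℂ} (hp : IsStarProjection p) : PVM (Fin 2) d where
  proj := ![p, 1 - p]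
  herm a := by
    fin_cases a
    exacts [hp.isSelfAdjoint.isHermitian, hp.one_sub.isSelfAdjoint.isHermitian]
  idem a := by
    fin_cases a
    exacts [hp.isIdempotentElem.eq, hp.one_sub.isIdempotentElem.eq]
  orthogonal a b hab := by
    fin_cases a <;> fin_cases b
    exacts [absurd rfl hab, hp.mul_one_sub_self, hp.one_sub_mul_self, absurd rfl hab]
  complete := by simp

lemma sum_pvmProb {ι : Type*} (P : PVM ι d) {σ : Matrix d d ℂ} (hσ : σ.trace = 1) :
    letI := P.fintype; ∑ a, pvmProb P σ a = 1 := by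
  let := P.fintype
  simp only [pvmProb, ← Complex.re_sum, ← trace_sum, ← Finset.sum_mul, P.complete, one_mul, hσ,
    Complex.one_re]

variable {ιA ιB : Type*} (P : PVM ιA dA) (Q : PVM ιB dB) (ρ : Matrix (dA × dB) (dA × dB) ℂ)

lemma jointProb_nonneg (hρ : ρ.PosSemidef) (x : ιA × ιB) : 0 ≤ jointProb P Q ρ x :=
  (Complex.nonneg_iff.mp (((P.isStarProjection_proj _).kronecker
    (Q.isStarProjection_proj _)).trace_mul_nonneg hρ)).1

lemma sum_jointProb_right (a : ιA) :
    letI := Q.fintype; ∑ b, jointProb P Q ρ (a, b) = ((P.proj a ⊗ₖ 1) * ρ).trace.re := by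
  let := Q.fintype
  simp only [jointProb, ← Complex.re_sum, ← trace_sum, ← Finset.sum_mul, ← kronecker_sum,
    Q.complete]

lemma sum_jointProb_left (b : ιB) :
    letI := P.fintype; ∑ a, jointProb P Q ρ (a, b) = ((1 ⊗ₖ Q.proj b) * ρ).trace.re := by
  let := P.fintype
  simp only [jointProb, ← Complex.re_sum, ← trace_sum, ← Finset.sum_mul, ← sum_kronecker,
    P.complete]

lemma sum_jointProb (hρ : ρ.trace = 1) :
    letI := P.fintype; letI := Q.fintype; ∑ x, jointProb P Q ρ x = 1 := by
  let := P.fintype; let := Q.fintype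
  rw [Fintype.sum_prod_type]
  simp only [sum_jointProb_right, ← Complex.re_sum, ← trace_sum, ← Finset.sum_mul,
    ← sum_kronecker, P.complete, one_kronecker_one, one_mul, hρ, Complex.one_re]

lemma jointProb_kronecker {σ₁ : Matrix dA dA ℂ} {σ₂ : Matrix dB dB ℂ} (h₁ : σ₁.IsHermitian)
    (h₂ : σ₂.IsHermitian) :
    jointProb P Q (σ₁ ⊗ₖ σ₂) = fun x => pvmProb P σ₁ x.1 * pvmProb Q σ₂ x.2 := by
  funext x
  rw [jointProb, ← mul_kronecker_mul, trace_kronecker,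
    ← (P.herm x.1).ofReal_re_trace_mul h₁, ← (Q.herm x.2).ofReal_re_trace_mul h₂]
  simp only [← Complex.ofReal_mul, Complex.ofReal_re, pvmProb]

end Measurement

section Span

variable {d : Type*} [Fintype d] [DecidableEq d]

lemma Matrix.isStarProjection_single_self (i : d) : IsStarProjection (single i i (1 : ℂ)) :=
  ⟨by simp [IsIdempotentElem], by simp [IsSelfAdjoint, star_eq_conjTranspose]⟩

lemma Matrix.isStarProjection_inv_smul_vecMulVec {w : d → ℂ} (hw : w ≠ 0) :
    IsStarProjection ((star w ⬝ᵥ w)⁻¹ • vecMulVec w (star w)) := by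
  have hn : star w ⬝ᵥ w ≠ 0 := dotProduct_star_self_eq_zero.not.mpr hw
  have hreal : star (star w ⬝ᵥ w) = star w ⬝ᵥ w := by rw [← star_dotProduct]
  refine ⟨?_, ?_⟩
  · rw [IsIdempotentElem, smul_mul_smul, vecMulVec_mul_vecMulVec, vecMulVec_smul, smul_smul,
      mul_assoc, inv_mul_cancel₀ hn, mul_one]
  · rw [IsSelfAdjoint, star_smul, star_eq_conjTranspose, conjTranspose_vecMulVec, star_star,
      star_inv₀, hreal]

lemma Matrix.vecMulVec_single_add_smul_single (i j : d) (c : ℂ) :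
    vecMulVec (Pi.single i 1 + c • Pi.single j 1) (star (Pi.single i 1 + c • Pi.single j 1))
      = single i i 1 + star c • single i j 1 + c • single j i 1 + (c * star c) • single j j 1 := by
  simp only [star_add, star_smul, Pi.star_single, star_one, add_vecMulVec, vecMulVec_add,
    smul_vecMulVec, vecMulVec_smul, ← single_eq_single_vecMulVec_single]
  module

lemma Matrix.star_dotProduct_single_add_smul_single {i j : d} (hij : i ≠ j) (c : ℂ) :
    star (Pi.single i 1 + c • Pi.single j 1) ⬝ᵥ (Pi.single i 1 + c • Pi.single j 1)
      = 1 + c * star c := by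
  simp [dotProduct_add, hij, hij.symm]

lemma Matrix.single_mem_span_isStarProjection (i j : d) :
    single i j (1 : ℂ) ∈ Submodule.span ℂ {p : Matrix d d ℂ | IsStarProjection p} := by
  rcases eq_or_ne i j with rfl | hij
  · exact Submodule.subset_span (isStarProjection_single_self i)
  -- `P 1` and `P I` project onto the lines through `eᵢ + eⱼ` and `eᵢ + I eⱼ`.
  set w : ℂ → d → ℂ := fun c => Pi.single i 1 + c • Pi.single j 1
  set P : ℂ → Matrix d d ℂ := fun c => (star (w c) ⬝ᵥ w c)⁻¹ • vecMulVec (w c) (star (w c))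
  have hP : ∀ c, P c ∈ Submodule.span ℂ {p : Matrix d d ℂ | IsStarProjection p} := fun c =>
    Submodule.subset_span <| isStarProjection_inv_smul_vecMulVec fun h => by
      simpa [w, hij] using congrFun h i
  have hE : ∀ k, single k k (1 : ℂ) ∈ Submodule.span ℂ {p : Matrix d d ℂ | IsStarProjection p} :=
    fun k => Submodule.subset_span (isStarProjection_single_self k)
  have key : single i j 1
      = P 1 + Complex.I • P Complex.I - ((1 + Complex.I) / 2) • (single i i 1 + single j j 1) := by
    simp only [P, w, star_dotProduct_single_add_smul_single hij, vecMulVec_single_add_smul_single,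
      Complex.star_def, map_one, Complex.conj_I, mul_one, mul_neg, Complex.I_mul_I, neg_neg]
    linear_combination (norm := module) Complex.I_sq •
      ((1 / 2 : ℂ) • single i j 1 - (1 / 2 : ℂ) • single j i 1)
  rw [key]
  exact sub_mem (add_mem (hP 1) (Submodule.smul_mem _ _ (hP _)))
    (Submodule.smul_mem _ _ (add_mem (hE i) (hE j)))

lemma Matrix.span_isStarProjection_eq_top :
    Submodule.span ℂ {p : Matrix d d ℂ | IsStarProjection p} = ⊤ := by
  refine Submodule.eq_top_iff'.mpr fun M => ?_
  rw [matrix_eq_sum_single M]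
  refine Submodule.sum_mem _ fun i _ => Submodule.sum_mem _ fun j _ => ?_
  simpa [smul_single] using Submodule.smul_mem _ (M i j) (single_mem_span_isStarProjection i j)

end Span

section Forward

variable {dA dB : Type*} [Fintype dA] [DecidableEq dA] [Fintype dB] [DecidableEq dB]
  {ρ : Matrix (dA × dB) (dA × dB) ℂ}

lemma trace_kronecker_mul_eq_mul_of_miOf_eq_zero {ιA ιB : Type*} (P : PVM ιA dA)
    (Q : PVM ιB dB) (hρ : ρ.PosSemidef) (htr : ρ.trace = 1) (h : miOf P Q ρ = 0)
    (a : ιA) (b : ιB) :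
    ((P.proj a ⊗ₖ Q.proj b) * ρ).trace
      = ((P.proj a ⊗ₖ 1) * ρ).trace * ((1 ⊗ₖ Q.proj b) * ρ).trace := by
  let := P.fintype; let := Q.fintype
  have hprod := congrFun (eq_mul_marginals_of_mutualInfo_eq_zero (jointProb_nonneg P Q ρ hρ)
    (sum_jointProb P Q ρ htr) h) (a, b)
  simp only [sum_jointProb_right, sum_jointProb_left] at hprod
  have hP := P.herm a
  have hQ := Q.herm b
  rw [← (hP.kronecker hQ).ofReal_re_trace_mul hρ.1,
    ← (hP.kronecker isHermitian_one).ofReal_re_trace_mul hρ.1,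
    ← (isHermitian_one.kronecker hQ).ofReal_re_trace_mul hρ.1, ← Complex.ofReal_mul]
  exact congrArg _ hprod

lemma trace_kronecker_mul_eq_mul_of_forall_miOf_eq_zero (hρ : ρ.PosSemidef)
    (htr : ρ.trace = 1)
    (h : ∀ (ιA ιB : Type) (P : PVM ιA dA) (Q : PVM ιB dB), miOf P Q ρ = 0)
    (X : Matrix dA dA ℂ) (Y : Matrix dB dB ℂ) :
    ((X ⊗ₖ Y) * ρ).trace = ((X ⊗ₖ 1) * ρ).trace * ((1 ⊗ₖ Y) * ρ).trace := by
  let B : Matrix dA dA ℂ →ₗ[ℂ] Matrix dB dB ℂ →ₗ[ℂ] ℂ := LinearMap.mk₂ ℂ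
    (fun X Y => ((X ⊗ₖ Y) * ρ).trace - ((X ⊗ₖ 1) * ρ).trace * ((1 ⊗ₖ Y) * ρ).trace)
    (by intros; simp only [add_kronecker, add_mul, trace_add]; ring)
    (by intros; simp only [smul_kronecker, smul_mul, trace_smul, smul_eq_mul]; ring)
    (by intros; simp only [kronecker_add, add_mul, trace_add]; ring)
    (by intros; simp only [kronecker_smul, smul_mul, trace_smul, smul_eq_mul]; ring)
  have hB : B = 0 := LinearMap.ext_on span_isStarProjection_eq_top fun p hp =>
    LinearMap.ext_on span_isStarProjection_eq_top fun q hq =>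
      sub_eq_zero.mpr (trace_kronecker_mul_eq_mul_of_miOf_eq_zero (projPVM hp) (projPVM hq)
        hρ htr (h _ _ _ _) 0 0)
  exact sub_eq_zero.mp (LinearMap.congr_fun₂ hB X Y)

end Forward

section Backward

variable {dA dB : Type*} [Fintype dA] [DecidableEq dA] [Fintype dB] [DecidableEq dB]

lemma miOf_kronecker_eq_zero {σ₁ : Matrix dA dA ℂ} {σ₂ : Matrix dB dB ℂ} (h₁ : σ₁.IsHermitian)
    (h₂ : σ₂.IsHermitian) (htr₁ : σ₁.trace = 1) (htr₂ : σ₂.trace = 1) {ιA ιB : Type*}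
    (P : PVM ιA dA) (Q : PVM ιB dB) : miOf P Q (σ₁ ⊗ₖ σ₂) = 0 := by
  let := P.fintype; let := Q.fintype
  change mutualInfo (jointProb P Q (σ₁ ⊗ₖ σ₂)) = 0
  rw [jointProb_kronecker P Q h₁ h₂]
  exact mutualInfo_mul (sum_pvmProb P htr₁) (sum_pvmProb Q htr₂)

lemma miOf_eq_zero_of_eq_kronecker {ρ : Matrix (dA × dB) (dA × dB) ℂ} (hρ : ρ.IsHermitian)
    (htr : ρ.trace = 1) (hprod : ρ = ptraceR ρ ⊗ₖ ptraceL ρ) {ιA ιB : Type*} (P : PVM ιA dA)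
    (Q : PVM ιB dB) : miOf P Q ρ = 0 := by
  rw [hprod]
  exact miOf_kronecker_eq_zero hρ.ptraceR hρ.ptraceL (trace_ptraceR.trans htr)
    (trace_ptraceL.trans htr) P Q

end Backward

lemma measuredMI_eq_zero {dA dB : Type} [Fintype dA] [DecidableEq dA] [Fintype dB]
    [DecidableEq dB] {ρ : Matrix (dA × dB) (dA × dB) ℂ}
    (h : ∀ (ιA ιB : Type) (P : PVM ιA dA) (Q : PVM ιB dB), miOf P Q ρ = 0) :
    measuredMI ρ = 0 := by
  have hset : {r : ℝ | ∃ (ιA ιB : Type) (P : PVM ιA dA) (Q : PVM ιB dB), r = miOf P Q ρ} = {0} :=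
    Set.eq_singleton_iff_unique_mem.mpr ⟨⟨dA, dB, compPVM dA, compPVM dB, (h _ _ _ _).symm⟩,
      by rintro r ⟨ιA, ιB, P, Q, rfl⟩; exact h ιA ιB P Q⟩
  rw [measuredMI, hset, csSup_singleton]

/-- for a two-qubit density matrix, the measured mutual information
vanishes (every product PVM gives zero mutual information) iff the state is the product
of its marginals; consequently positive measured mutual information certifies that the
state is not a product state. -/
theorem measured_mi_zero_iff_product
    (ρ : Matrix (Fin 2 × Fin 2) (Fin 2 × Fin 2) ℂ)
    (hpsd : ρ.PosSemidef) (htr : ρ.trace = 1) :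
    ((∀ (ιA ιB : Type) (P : PVM ιA (Fin 2)) (Q : PVM ιB (Fin 2)), miOf P Q ρ = 0) ↔
        ρ = ptraceR ρ ⊗ₖ ptraceL ρ) ∧
    (0 < measuredMI ρ → ρ ≠ ptraceR ρ ⊗ₖ ptraceL ρ) := by
  have hiff : (∀ (ιA ιB : Type) (P : PVM ιA (Fin 2)) (Q : PVM ιB (Fin 2)), miOf P Q ρ = 0) ↔
      ρ = ptraceR ρ ⊗ₖ ptraceL ρ :=
    ⟨fun h => eq_ptraceR_kronecker_ptraceL
        (trace_kronecker_mul_eq_mul_of_forall_miOf_eq_zero hpsd htr h),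
      fun hprod _ _ => miOf_eq_zero_of_eq_kronecker hpsd.isHermitian htr hprod⟩
  exact ⟨hiff, fun hpos hprod => hpos.ne' (measuredMI_eq_zero (hiff.mpr hprod))⟩

end
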